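/- arXiv:math/0608213 — 4 statements merged into one kernel-verified Lean document; each statement's English description precedes it below -/
import Mathlib

section
/- Let V be a real inner product space, p ∈ ℝ, and J₁, J₂ : V → V be ℝ-linear maps with J₁² = -id, J₂² = -id, ⟨Jᵢx, Jᵢy⟩ = ⟨x, y⟩ for all x, y ∈ V (i = 1, 2), and J₁J₂ + J₂J₁ = -(2p)·id. Define ω⁺(x,y) = ⟨J₁x, y⟩ and ω⁻(x,y) = ⟨J₂x, y⟩. Then for all x, y ∈ V, (ω⁻(x,y) + ω⁻(J₁x, J₁y))/2 = p·ω⁺(x,y), i.e. the J₁-invariant part of ω⁻ equals p·ω⁺. (This is the claim in the proof of Proposition 4 that 'the (1,1) component of ω⁻ is the multiple p of ω⁺'.) -/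
open RealInnerProductSpace

/-- The `J₁`-invariant part of `ω⁻` equals `p·ω⁺`. -/
theorem invariant_part_omega_minus (V : Type*) [NormedAddCommGroup V]
    [InnerProductSpace ℝ V] (p : ℝ) (J₁ J₂ : V →ₗ[ℝ] V)
    (hJ₁ : ∀ x, J₁ (J₁ x) = -x) (hJ₂ : ∀ x, J₂ (J₂ x) = -x)
    (hJ₁m : ∀ x y, ⟪J₁ x, J₁ y⟫ = ⟪x, y⟫)
    (hJ₂m : ∀ x y, ⟪J₂ x, J₂ y⟫ = ⟪x, y⟫)
    (hanti : ∀ x, J₁ (J₂ x) + J₂ (J₁ x) = (-(2 * p)) • x)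
    (ωp ωm : V → V → ℝ)
    (hωp : ∀ x y, ωp x y = ⟪J₁ x, y⟫)
    (hωm : ∀ x y, ωm x y = ⟪J₂ x, y⟫) :
    ∀ x y, (ωm x y + ωm (J₁ x) (J₁ y)) / 2 = p * ωp x y := by
  intro x y
  have h1 : J₂ (J₁ x) = (-(2 * p)) • x - J₁ (J₂ x) :=
    eq_sub_of_add_eq' (hanti x)
  have h2 : ⟪J₁ (J₂ x), J₁ y⟫ = ⟪J₂ x, y⟫ := hJ₁m _ _
  have h3 : ⟪x, J₁ y⟫ = -⟪J₁ x, y⟫ := by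
    have := hJ₁m x (J₁ y)
    rw [hJ₁ y] at this
    rw [← this, inner_neg_right]
  rw [hωm, hωm, hωp, h1, inner_sub_left, inner_smul_left, h2, h3]
  rw [starRingEnd_apply, star_trivial]; ring
end

section
/- Let V be a real inner product space, p ∈ ℝ, and J₁, J₂ : V → V be ℝ-linear maps with J₁² = -id, J₂² = -id, ⟨Jᵢx, Jᵢy⟩ = ⟨x, y⟩ for all x, y ∈ V (i = 1, 2), and J₁J₂ + J₂J₁ = -(2p)·id. Define ω⁺(x,y) = ⟨J₁x, y⟩ and φ''(x,y) = ⟨(J₁J₂ − J₂J₁)(J₂x), y⟩. Then for all x, y ∈ V, (φ''(x,y) + φ''(J₁x, J₁y))/2 = 2(p² − 1)·ω⁺(x,y), i.e. the J₁-invariant part of φ'' equals 2(p²−1)·ω⁺. (This is the claim in the proof of Proposition 2 that 'the (1,1) part of φ'' is 2(p²−1)ω⁺'.) -/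
open RealInnerProductSpace

/-- The `J₁`-invariant part of `φ''` equals `2(p²−1)·ω⁺`. -/
theorem invariant_part_phi_double_prime (V : Type*) [NormedAddCommGroup V]
    [InnerProductSpace ℝ V] (p : ℝ) (J₁ J₂ : V →ₗ[ℝ] V)
    (hJ₁ : ∀ x, J₁ (J₁ x) = -x) (hJ₂ : ∀ x, J₂ (J₂ x) = -x)
    (hJ₁m : ∀ x y, ⟪J₁ x, J₁ y⟫ = ⟪x, y⟫)
    (hJ₂m : ∀ x y, ⟪J₂ x, J₂ y⟫ = ⟪x, y⟫)
    (hanti : ∀ x, J₁ (J₂ x) + J₂ (J₁ x) = (-(2 * p)) • x)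
    (ωp φ'' : V → V → ℝ)
    (hωp : ∀ x y, ωp x y = ⟪J₁ x, y⟫)
    (hφ'' : ∀ x y, φ'' x y = ⟪J₁ (J₂ (J₂ x)) - J₂ (J₁ (J₂ x)), y⟫) :
    ∀ x y, (φ'' x y + φ'' (J₁ x) (J₁ y)) / 2 = 2 * (p ^ 2 - 1) * ωp x y := by
  intro x y
  have key1 : ∀ z, J₂ (J₁ z) = (-(2 * p)) • z - J₁ (J₂ z) := by
    intro z
    have h := hanti z
    rw [← h]; abel
  have key2 : ∀ z, J₂ (J₁ (J₂ z)) = (-(2 * p)) • J₂ z + J₁ z := by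
    intro z
    rw [key1 (J₂ z), hJ₂ z, map_neg]
    abel
  have hskew : ∀ a b : V, ⟪a, J₁ b⟫ = -⟪J₁ a, b⟫ := by
    intro a b
    have h := hJ₁m (J₁ a) b
    rw [hJ₁ a, inner_neg_left] at h
    linarith [hJ₁m a (J₁ b), hJ₁m (J₁ a) b]
  rw [hφ'', hφ'', hωp, hJ₂ x, hJ₂ (J₁ x), key2 x, key2 (J₁ x), key1 x,
    map_neg, map_neg, hJ₁ x]
  simp only [inner_sub_left, inner_add_left, inner_neg_left, inner_smul_left,
    RCLike.inner_apply, conj_trivial, neg_neg, smul_neg, sub_neg_eq_add, neg_smul,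
    inner_neg_neg]
  have e1 := hskew x y
  have e2 := hskew (J₂ x) y
  have e3 := hJ₁m (J₂ x) y
  rw [e1, e3]
  ring
end

section
/- Let V be a real inner product space, p ∈ ℝ with p² ≠ 1, and J₁, J₂ : V → V be ℝ-linear maps with J₁² = -id, J₂² = -id, ⟨Jᵢx, Jᵢy⟩ = ⟨x, y⟩ for all x, y ∈ V (i = 1, 2), and J₁J₂ + J₂J₁ = -(2p)·id. Define ω⁺(x,y) = ⟨J₁x, y⟩, φ''(x,y) = ⟨(J₁J₂ − J₂J₁)(J₂x), y⟩, and ω''(x,y) = -φ''(x,y)/(8(1 − p²)). Then for all x, y ∈ V, (ω''(x,y) + ω''(J₁x, J₁y))/2 = ω⁺(x,y)/4, i.e. the J₁-invariant part of ω'' equals ω⁺/4. (This is the pointwise algebraic content of Proposition 2: the hermitian form ω⁺ is the (1,1) component, with respect to I⁺, of 4ω''.) -/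
open RealInnerProductSpace

/-- Proposition 2 (pointwise algebraic content): the `J₁`-invariant part of
`ω'' = -φ''/(8(1−p²))` equals `ω⁺/4`. -/
theorem invariant_part_omega_double_prime (V : Type*) [NormedAddCommGroup V]
    [InnerProductSpace ℝ V] (p : ℝ) (hp : p ^ 2 ≠ 1) (J₁ J₂ : V →ₗ[ℝ] V)
    (hJ₁ : ∀ x, J₁ (J₁ x) = -x) (hJ₂ : ∀ x, J₂ (J₂ x) = -x)
    (hJ₁m : ∀ x y, ⟪J₁ x, J₁ y⟫ = ⟪x, y⟫)
    (hJ₂m : ∀ x y, ⟪J₂ x, J₂ y⟫ = ⟪x, y⟫)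
    (hanti : ∀ x, J₁ (J₂ x) + J₂ (J₁ x) = (-(2 * p)) • x)
    (ωp φ'' ω'' : V → V → ℝ)
    (hωp : ∀ x y, ωp x y = ⟪J₁ x, y⟫)
    (hφ'' : ∀ x y, φ'' x y = ⟪J₁ (J₂ (J₂ x)) - J₂ (J₁ (J₂ x)), y⟫)
    (hω'' : ∀ x y, ω'' x y = -φ'' x y / (8 * (1 - p ^ 2))) :
    ∀ x y, (ω'' x y + ω'' (J₁ x) (J₁ y)) / 2 = ωp x y / 4 := by
  intro x y
  have hne : (1 : ℝ) - p ^ 2 ≠ 0 := sub_ne_zero.mpr (Ne.symm hp)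
  -- skew-adjointness of J₁
  have skew1 : ∀ a b : V, ⟪J₁ a, b⟫ = -⟪a, J₁ b⟫ := by
    intro a b
    have h := hJ₁m (J₁ a) b
    rw [hJ₁ a, inner_neg_left] at h
    linarith
  -- J₁ J₂ = -(2p) - J₂ J₁
  have e1 : ∀ a : V, J₁ (J₂ a) = (-(2 * p)) • a - J₂ (J₁ a) := by
    intro a
    have := hanti a
    rw [← this]; abel
  -- the vector appearing in φ''
  have v1 : ∀ a : V, J₁ (J₂ (J₂ a)) - J₂ (J₁ (J₂ a)) =
      (-2 : ℝ) • J₁ a + (2 * p) • J₂ a := by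
    intro a
    have h2 : J₂ (J₁ (J₂ a)) = (-(2 * p)) • J₂ a + J₁ a := by
      rw [e1 a, map_sub, map_smul, hJ₂ (J₁ a)]
      abel
    rw [hJ₂ a, map_neg, h2]
    module
  -- φ''(x,y) = -2⟪J₁x,y⟫ + 2p⟪J₂x,y⟫
  have f1 : ∀ a b : V, φ'' a b = -2 * ⟪J₁ a, b⟫ + 2 * p * ⟪J₂ a, b⟫ := by
    intro a b
    rw [hφ'' a b, v1 a, inner_add_left, inner_smul_left, inner_smul_left]
    norm_num
  -- second term of the invariant part
  have f2 : φ'' (J₁ x) (J₁ y) = (4 * p ^ 2 - 2) * ⟪J₁ x, y⟫ - 2 * p * ⟪J₂ x, y⟫ := by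
    rw [f1]
    have hA : ⟪J₁ (J₁ x), J₁ y⟫ = ⟪J₁ x, y⟫ := hJ₁m (J₁ x) y
    have hB : ⟪J₂ (J₁ x), J₁ y⟫ = 2 * p * ⟪J₁ x, y⟫ - ⟪J₂ x, y⟫ := by
      have h := skew1 (J₂ (J₁ x)) y
      have h3 : J₁ (J₂ (J₁ x)) = (-(2 * p)) • J₁ x + J₂ x := by
        rw [e1 (J₁ x), hJ₁ x, map_neg]; abel
      have h4 : ⟪J₁ (J₂ (J₁ x)), y⟫ = -(2 * p) * ⟪J₁ x, y⟫ + ⟪J₂ x, y⟫ := by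
        rw [h3, inner_add_left, inner_smul_left]; norm_num
      -- skew1 gives ⟪J₁ a, b⟫ = -⟪a, J₁ b⟫, so ⟪a, J₁ b⟫ = -⟪J₁ a, b⟫
      have h5 : ⟪J₂ (J₁ x), J₁ y⟫ = -⟪J₁ (J₂ (J₁ x)), y⟫ := by
        have := skew1 (J₂ (J₁ x)) y
        linarith
      rw [h5, h4]; ring
    rw [hA, hB]; ring
  have key : φ'' x y + φ'' (J₁ x) (J₁ y) = (4 * p ^ 2 - 4) * ⟪J₁ x, y⟫ := by
    rw [f1 x y, f2]; ring
  rw [hω'' x y, hω'' (J₁ x) (J₁ y), hωp x y]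
  field_simp
  nlinarith [key, sq_nonneg p]
end

section
/- Let V be a real inner product space, p ∈ ℝ with p ≠ 1 and p ≠ -1, and J₁, J₂ : V → V be ℝ-linear maps with J₁² = -id, J₂² = -id, ⟨Jᵢx, Jᵢy⟩ = ⟨x, y⟩ for all x, y ∈ V (i = 1, 2), and J₁J₂ + J₂J₁ = -(2p)·id. Define ω⁺(x,y) = ⟨J₁x, y⟩, ω⁻(x,y) = ⟨J₂x, y⟩, φ'(x,y) = ⟨(J₁J₂ − J₂J₁)(J₁x), y⟩, and φ''(x,y) = ⟨(J₁J₂ − J₂J₁)(J₂x), y⟩. Then for all x, y ∈ V, (φ'(x,y) − φ''(x,y))/(8(1 − p²)) = (ω⁺(x,y) + ω⁻(x,y))/(4(1 + p)). (This is the pointwise identity ω'' − ω' = (φ' − φ'')/(8(1−p²)) = (ω⁺ + ω⁻)/(4(1+p)) in the proof of Proposition 4.) -/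
open RealInnerProductSpace

/-- Proposition 4 (pointwise identity): `(φ' − φ'')/(8(1−p²)) = (ω⁺ + ω⁻)/(4(1+p))`. -/
theorem omega_difference_identity (V : Type*) [NormedAddCommGroup V]
    [InnerProductSpace ℝ V] (p : ℝ) (hp1 : p ≠ 1) (hp2 : p ≠ -1)
    (J₁ J₂ : V →ₗ[ℝ] V)
    (hJ₁ : ∀ x, J₁ (J₁ x) = -x) (hJ₂ : ∀ x, J₂ (J₂ x) = -x)
    (hJ₁m : ∀ x y, ⟪J₁ x, J₁ y⟫ = ⟪x, y⟫)
    (hJ₂m : ∀ x y, ⟪J₂ x, J₂ y⟫ = ⟪x, y⟫)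
    (hanti : ∀ x, J₁ (J₂ x) + J₂ (J₁ x) = (-(2 * p)) • x)
    (ωp ωm φ' φ'' : V → V → ℝ)
    (hωp : ∀ x y, ωp x y = ⟪J₁ x, y⟫)
    (hωm : ∀ x y, ωm x y = ⟪J₂ x, y⟫)
    (hφ' : ∀ x y, φ' x y = ⟪J₁ (J₂ (J₁ x)) - J₂ (J₁ (J₁ x)), y⟫)
    (hφ'' : ∀ x y, φ'' x y = ⟪J₁ (J₂ (J₂ x)) - J₂ (J₁ (J₂ x)), y⟫) :
    ∀ x y, (φ' x y - φ'' x y) / (8 * (1 - p ^ 2)) = (ωp x y + ωm x y) / (4 * (1 + p)) := by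
  intro x y
  have h1 : (1 : ℝ) - p ^ 2 ≠ 0 := by
    intro h
    rcases mul_eq_zero.mp (show (1 - p) * (1 + p) = 0 by linear_combination h) with h' | h'
    · exact hp1 (by linarith)
    · exact hp2 (by linarith)
  have h2 : (1 : ℝ) + p ≠ 0 := by intro h; exact hp2 (by linarith)
  have hA := hanti (J₁ x)
  have hB := hanti (J₂ x)
  rw [hJ₁ x, map_neg] at hA
  rw [hJ₂ x, map_neg] at hB
  have e1 : J₁ (J₂ (J₁ x)) - J₂ (J₁ (J₁ x)) = (-(2 * p)) • J₁ x + (2 : ℝ) • J₂ x := by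
    rw [hJ₁ x, map_neg]
    linear_combination (norm := module) hA
  have e2 : J₁ (J₂ (J₂ x)) - J₂ (J₁ (J₂ x)) = (-(2 : ℝ)) • J₁ x + (2 * p) • J₂ x := by
    rw [hJ₂ x, map_neg]
    linear_combination (norm := module) (-1 : ℝ) • hB
  rw [hφ', hφ'', hωp, hωm, e1, e2]
  simp only [inner_add_left, inner_smul_left, RCLike.star_def, starRingEnd_apply, star_trivial]
  field_simp
  ring
end
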